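/- The polynomial function f : ℝ² → ℝ given by f(x,y) = x·(x + 3y² − 2)·(x + y² − 1) has only nondegenerate critical points, and it has exactly ten critical points, of which exactly three are local minima, exactly six are saddles, and exactly one is a local maximum. -/

import Mathlib

/-- A point `p = (x₀, y₀)` is a critical point of `f : ℝ → ℝ → ℝ` if both
partial derivatives of `f` vanish at `p`. -/
def IsCriticalPt (f : ℝ → ℝ → ℝ) (p : ℝ × ℝ) : Prop :=
  deriv (fun t => f t p.2) p.1 = 0 ∧ deriv (fun t => f p.1 t) p.2 = 0

/-- The Hessian determinant `f_xx(p) * f_yy(p) - f_xy(p)^2` of `f` at `p`. -/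
noncomputable def hessDet (f : ℝ → ℝ → ℝ) (p : ℝ × ℝ) : ℝ :=
  deriv (fun x => deriv (fun t => f t p.2) x) p.1 *
      deriv (fun y => deriv (fun t => f p.1 t) y) p.2 -
    (deriv (fun y => deriv (fun t => f t y) p.1) p.2) ^ 2

/-- `p` is a local minimum point of the function `(x, y) ↦ f x y`. -/
def IsLocMin (f : ℝ → ℝ → ℝ) (p : ℝ × ℝ) : Prop :=
  IsLocalMin (fun q : ℝ × ℝ => f q.1 q.2) p

/-- `p` is a local maximum point of the function `(x, y) ↦ f x y`. -/
def IsLocMax (f : ℝ → ℝ → ℝ) (p : ℝ × ℝ) : Prop :=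
  IsLocalMax (fun q : ℝ × ℝ => f q.1 q.2) p

/-- A saddle is a critical point that is neither a local minimum
nor a local maximum. -/
def IsSaddle (f : ℝ → ℝ → ℝ) (p : ℝ × ℝ) : Prop :=
  IsCriticalPt f p ∧ ¬ IsLocMin f p ∧ ¬ IsLocMax f p

/-- Realizing polynomial (J₁₀³, ten critical points, one maximum). -/
noncomputable def f8 : ℝ → ℝ → ℝ := fun x y => x * (x + 3 * y ^ 2 - 2) * (x + y ^ 2 - 1)

noncomputable def s3 : ℝ := Real.sqrt 3
noncomputable def s2 : ℝ := Real.sqrt 2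
noncomputable def s6 : ℝ := Real.sqrt 6
noncomputable def s26 : ℝ := Real.sqrt 26

lemma s3_sq : s3^2 = 3 := Real.sq_sqrt (by norm_num)
lemma s2_sq : s2^2 = 2 := Real.sq_sqrt (by norm_num)
lemma s6_sq : s6^2 = 6 := Real.sq_sqrt (by norm_num)
lemma s26_sq : s26^2 = 26 := Real.sq_sqrt (by norm_num)

lemma s3_nn : 0 ≤ s3 := Real.sqrt_nonneg 3
lemma s2_nn : 0 ≤ s2 := Real.sqrt_nonneg 2
lemma s6_nn : 0 ≤ s6 := Real.sqrt_nonneg 6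
lemma s26_nn : 0 ≤ s26 := Real.sqrt_nonneg 26

lemma s3_b : 1.73 < s3 ∧ s3 < 1.74 := by
  constructor <;> nlinarith [s3_sq, s3_nn]
lemma s2_b : 1.41 < s2 ∧ s2 < 1.42 := by
  constructor <;> nlinarith [s2_sq, s2_nn]
lemma s6_b : 2.44 < s6 ∧ s6 < 2.45 := by
  constructor <;> nlinarith [s6_sq, s6_nn]
lemma s26_b : 5.09 < s26 ∧ s26 < 5.1 := by
  constructor <;> nlinarith [s26_sq, s26_nn]

lemma hdX (y x : ℝ) :
    HasDerivAt (fun t => f8 t y) (3*x^2+(8*y^2-6)*x+(3*y^4-5*y^2+2)) x := by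
  have h : (fun t => f8 t y) = fun t : ℝ => t^3+(4*y^2-3)*t^2+(3*y^4-5*y^2+2)*t := by
    funext t; simp only [f8]; ring
  rw [h]
  have := ((hasDerivAt_pow 3 x).add (((hasDerivAt_pow 2 x)).const_mul (4*y^2-3))).add
    ((hasDerivAt_id' x).const_mul (3*y^4-5*y^2+2))
  simp only [Pi.add_def] at this
  refine this.congr_deriv ?_
  push_cast; ring

lemma hdY (x y : ℝ) :
    HasDerivAt (fun t => f8 x t) (12*x*y^3+(8*x^2-10*x)*y) y := by
  have h : (fun t => f8 x t) = fun t : ℝ => 3*x*t^4+(4*x^2-5*x)*t^2+(x^3-3*x^2+2*x) := by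
    funext t; simp only [f8]; ring
  rw [h]
  have := (((hasDerivAt_pow 4 y).const_mul (3*x)).add
    (((hasDerivAt_pow 2 y)).const_mul (4*x^2-5*x))).add_const (x^3-3*x^2+2*x)
  simp only [Pi.add_def] at this
  refine this.congr_deriv ?_
  push_cast; ring

lemma dX (x y : ℝ) : deriv (fun t => f8 t y) x = 3*x^2+(8*y^2-6)*x+(3*y^4-5*y^2+2) :=
  (hdX y x).deriv

lemma dY (x y : ℝ) : deriv (fun t => f8 x t) y = 12*x*y^3+(8*x^2-10*x)*y :=
  (hdY x y).deriv

lemma crit_iff (x y : ℝ) : IsCriticalPt f8 (x, y) ↔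
    (3*x^2+(8*y^2-6)*x+(3*y^4-5*y^2+2) = 0 ∧ 2*x*y*(4*x+6*y^2-5) = 0) := by
  unfold IsCriticalPt
  rw [dX x y, dY x y]
  constructor
  · rintro ⟨h1, h2⟩; exact ⟨h1, by linear_combination h2⟩
  · rintro ⟨h1, h2⟩; exact ⟨h1, by linear_combination h2⟩

lemma hessDet_eq (x y : ℝ) : hessDet f8 (x, y) =
    (6*x+8*y^2-6)*(36*x*y^2+8*x^2-10*x) - (12*y^3+(16*x-10)*y)^2 := by
  unfold hessDet
  have e1 : (fun x' => deriv (fun t => f8 t (x,y).2) x') =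
      fun x' : ℝ => x'^2*3+x'*(8*y^2-6)+(3*y^4-5*y^2+2) := by
    funext x'; rw [dX]; ring
  have e2 : (fun y' => deriv (fun t => f8 (x,y).1 t) y') =
      fun y' : ℝ => 12*x*y'^3+(8*x^2-10*x)*y' := by
    funext y'; rw [dY]
  have e3 : (fun y' => deriv (fun t => f8 t y') (x,y).1) =
      fun y' : ℝ => 3*y'^4+(8*x-5)*y'^2+(3*x^2+(-6)*x+2) := by
    funext y'; rw [dX]; ring
  rw [e1, e2, e3]
  have d1 : deriv (fun x' : ℝ => x'^2*3+x'*(8*y^2-6)+(3*y^4-5*y^2+2)) x = 6*x+8*y^2-6 := by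
    have := (((hasDerivAt_pow 2 x).mul_const (3:ℝ)).add
      ((hasDerivAt_id' x).mul_const (8*y^2-6))).add_const (3*y^4-5*y^2+2)
    simp only [Pi.add_def] at this
    rw [this.deriv]; push_cast; ring
  have d2 : deriv (fun y' : ℝ => 12*x*y'^3+(8*x^2-10*x)*y') y = 36*x*y^2+8*x^2-10*x := by
    have := (((hasDerivAt_pow 3 y).const_mul (12*x)).add
      ((hasDerivAt_id' y).const_mul (8*x^2-10*x)))
    simp only [Pi.add_def] at this
    rw [this.deriv]; push_cast; ring
  have d3 : deriv (fun y' : ℝ => 3*y'^4+(8*x-5)*y'^2+(3*x^2+(-6)*x+2)) y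
      = 12*y^3+(16*x-10)*y := by
    have := (((hasDerivAt_pow 4 y).const_mul (3:ℝ)).add
      ((hasDerivAt_pow 2 y).const_mul (8*x-5))).add_const (3*x^2+(-6)*x+2)
    simp only [Pi.add_def] at this
    rw [this.deriv]; push_cast; ring
  rw [d1, d2, d3]

def S10 : Set (ℝ × ℝ) :=
  {(1+s3/3, 0), (1-s3/3, 0), ((1:ℝ)/2, s2/2), ((1:ℝ)/2, -s2/2), ((1:ℝ)/6, s26/6), ((1:ℝ)/6, -s26/6),
   (0, 1), (0, -1), (0, s6/3), (0, -s6/3)}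

lemma critset : {p : ℝ × ℝ | IsCriticalPt f8 p} = S10 := by
  ext ⟨x, y⟩
  simp only [Set.mem_setOf_eq, crit_iff, S10, Set.mem_insert_iff, Set.mem_singleton_iff,
    Prod.mk.injEq]
  constructor
  · rintro ⟨h1, h2⟩
    rcases mul_eq_zero.1 h2 with h | h3
    · rcases mul_eq_zero.1 h with h | hy
      · -- x = 0
        have hx : x = 0 := by linarith
        subst hx
        have h4 : (y-1)*(y+1)*(3*y^2-2) = 0 := by linear_combination h1
        rcases mul_eq_zero.1 h4 with h5 | h6
        · rcases mul_eq_zero.1 h5 with h7 | h7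
          · exact Or.inr (Or.inr (Or.inr (Or.inr (Or.inr (Or.inr (Or.inl ⟨rfl, by linarith⟩))))))
          · exact Or.inr (Or.inr (Or.inr (Or.inr (Or.inr (Or.inr (Or.inr (Or.inl ⟨rfl, by linarith⟩)))))))
        · have h7 : (y - s6/3)*(y + s6/3) = 0 := by linear_combination h6/3 - s6_sq/9
          rcases mul_eq_zero.1 h7 with h8 | h8
          · exact Or.inr (Or.inr (Or.inr (Or.inr (Or.inr (Or.inr (Or.inr (Or.inr (Or.inl ⟨rfl, by linarith⟩))))))))
          · exact Or.inr (Or.inr (Or.inr (Or.inr (Or.inr (Or.inr (Or.inr (Or.inr (Or.inr ⟨rfl, by linarith⟩))))))))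
      · -- y = 0
        subst hy
        have h4 : (x - (1+s3/3))*(x - (1-s3/3))*3 = 0 := by
          linear_combination h1 - s3_sq/3
        rcases mul_eq_zero.1 h4 with h5 | h6
        · rcases mul_eq_zero.1 h5 with h7 | h7
          · exact Or.inl ⟨by linarith, rfl⟩
          · exact Or.inr (Or.inl ⟨by linarith, rfl⟩)
        · norm_num at h6
    · -- 4x + 6y² - 5 = 0
      have hx : x = 5/4 - 3/2*y^2 := by linarith
      subst hx
      have h4 : (2*y^2-1)*(18*y^2-13) = 0 := by linear_combination (-16)*h1
      rcases mul_eq_zero.1 h4 with h5 | h6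
      · have h7 : (y - s2/2)*(y + s2/2) = 0 := by linear_combination h5/2 - s2_sq/4
        rcases mul_eq_zero.1 h7 with h8 | h8
        · refine Or.inr (Or.inr (Or.inl ⟨?_, by linarith⟩))
          linear_combination (-3/2*(y + s2/2))*h8 - 3/8*s2_sq
        · refine Or.inr (Or.inr (Or.inr (Or.inl ⟨?_, by linarith⟩)))
          linear_combination (-3/2*(y - s2/2))*h8 - 3/8*s2_sq
      · have h7 : (y - s26/6)*(y + s26/6) = 0 := by linear_combination h6/18 - s26_sq/36
        rcases mul_eq_zero.1 h7 with h8 | h8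
        · refine Or.inr (Or.inr (Or.inr (Or.inr (Or.inl ⟨?_, by linarith⟩))))
          linear_combination (-3/2*(y + s26/6))*h8 - s26_sq/24
        · refine Or.inr (Or.inr (Or.inr (Or.inr (Or.inr (Or.inl ⟨?_, by linarith⟩)))))
          linear_combination (-3/2*(y - s26/6))*h8 - s26_sq/24
  · rintro (⟨hx, hy⟩ | ⟨hx, hy⟩ | ⟨hx, hy⟩ | ⟨hx, hy⟩ | ⟨hx, hy⟩ | ⟨hx, hy⟩ | ⟨hx, hy⟩ | ⟨hx, hy⟩ | ⟨hx, hy⟩ | ⟨hx, hy⟩) <;> subst hx <;> subst hy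
    · exact ⟨by linear_combination s3_sq/3, by ring⟩
    · exact ⟨by linear_combination s3_sq/3, by ring⟩
    · exact ⟨by linear_combination (3/16*s2^2+1/8) * s2_sq, by linear_combination (3*s2/4) * s2_sq⟩
    · exact ⟨by linear_combination (3/16*s2^2+1/8) * s2_sq, by linear_combination (-3*s2/4) * s2_sq⟩
    · exact ⟨by linear_combination (s26^2/432 - 1/24) * s26_sq, by linear_combination (s26/108) * s26_sq⟩
    · exact ⟨by linear_combination (s26^2/432 - 1/24) * s26_sq, by linear_combination (-s26/108) * s26_sq⟩
    · exact ⟨by norm_num, by ring⟩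
    · exact ⟨by norm_num, by ring⟩
    · exact ⟨by linear_combination (s6^2/27 - 1/3) * s6_sq, by ring⟩
    · exact ⟨by linear_combination (s6^2/27 - 1/3) * s6_sq, by ring⟩

lemma nm1 : ((1+s3/3, 0) : ℝ × ℝ) ∉ ({(1-s3/3, 0), ((1:ℝ)/2, s2/2), ((1:ℝ)/2, -s2/2), ((1:ℝ)/6, s26/6), ((1:ℝ)/6, -s26/6), ((0:ℝ), (1:ℝ)), ((0:ℝ), (-1:ℝ)), ((0:ℝ), s6/3), ((0:ℝ), -s6/3)} : Set (ℝ × ℝ)) := by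
  intro h
  simp only [Set.mem_insert_iff, Set.mem_singleton_iff, Prod.mk.injEq] at h
  rcases h with ⟨h1, h2⟩ | ⟨h1, h2⟩ | ⟨h1, h2⟩ | ⟨h1, h2⟩ | ⟨h1, h2⟩ | ⟨h1, h2⟩ | ⟨h1, h2⟩ | ⟨h1, h2⟩ | ⟨h1, h2⟩ <;>
    nlinarith [s3_b.1, s3_b.2, s2_b.1, s2_b.2, s6_b.1, s6_b.2, s26_b.1, s26_b.2, s3_nn, s2_nn, s6_nn, s26_nn]

lemma nm2 : ((1-s3/3, 0) : ℝ × ℝ) ∉ ({((1:ℝ)/2, s2/2), ((1:ℝ)/2, -s2/2), ((1:ℝ)/6, s26/6), ((1:ℝ)/6, -s26/6), ((0:ℝ), (1:ℝ)), ((0:ℝ), (-1:ℝ)), ((0:ℝ), s6/3), ((0:ℝ), -s6/3)} : Set (ℝ × ℝ)) := by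
  intro h
  simp only [Set.mem_insert_iff, Set.mem_singleton_iff, Prod.mk.injEq] at h
  rcases h with ⟨h1, h2⟩ | ⟨h1, h2⟩ | ⟨h1, h2⟩ | ⟨h1, h2⟩ | ⟨h1, h2⟩ | ⟨h1, h2⟩ | ⟨h1, h2⟩ | ⟨h1, h2⟩ <;>
    nlinarith [s3_b.1, s3_b.2, s2_b.1, s2_b.2, s6_b.1, s6_b.2, s26_b.1, s26_b.2, s3_nn, s2_nn, s6_nn, s26_nn]

lemma nm3 : (((1:ℝ)/2, s2/2) : ℝ × ℝ) ∉ ({((1:ℝ)/2, -s2/2), ((1:ℝ)/6, s26/6), ((1:ℝ)/6, -s26/6), ((0:ℝ), (1:ℝ)), ((0:ℝ), (-1:ℝ)), ((0:ℝ), s6/3), ((0:ℝ), -s6/3)} : Set (ℝ × ℝ)) := by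
  intro h
  simp only [Set.mem_insert_iff, Set.mem_singleton_iff, Prod.mk.injEq] at h
  rcases h with ⟨h1, h2⟩ | ⟨h1, h2⟩ | ⟨h1, h2⟩ | ⟨h1, h2⟩ | ⟨h1, h2⟩ | ⟨h1, h2⟩ | ⟨h1, h2⟩ <;>
    nlinarith [s3_b.1, s3_b.2, s2_b.1, s2_b.2, s6_b.1, s6_b.2, s26_b.1, s26_b.2, s3_nn, s2_nn, s6_nn, s26_nn]

lemma nm4 : (((1:ℝ)/2, -s2/2) : ℝ × ℝ) ∉ ({((1:ℝ)/6, s26/6), ((1:ℝ)/6, -s26/6), ((0:ℝ), (1:ℝ)), ((0:ℝ), (-1:ℝ)), ((0:ℝ), s6/3), ((0:ℝ), -s6/3)} : Set (ℝ × ℝ)) := by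
  intro h
  simp only [Set.mem_insert_iff, Set.mem_singleton_iff, Prod.mk.injEq] at h
  rcases h with ⟨h1, h2⟩ | ⟨h1, h2⟩ | ⟨h1, h2⟩ | ⟨h1, h2⟩ | ⟨h1, h2⟩ | ⟨h1, h2⟩ <;>
    nlinarith [s3_b.1, s3_b.2, s2_b.1, s2_b.2, s6_b.1, s6_b.2, s26_b.1, s26_b.2, s3_nn, s2_nn, s6_nn, s26_nn]

lemma nm5 : (((1:ℝ)/6, s26/6) : ℝ × ℝ) ∉ ({((1:ℝ)/6, -s26/6), ((0:ℝ), (1:ℝ)), ((0:ℝ), (-1:ℝ)), ((0:ℝ), s6/3), ((0:ℝ), -s6/3)} : Set (ℝ × ℝ)) := by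
  intro h
  simp only [Set.mem_insert_iff, Set.mem_singleton_iff, Prod.mk.injEq] at h
  rcases h with ⟨h1, h2⟩ | ⟨h1, h2⟩ | ⟨h1, h2⟩ | ⟨h1, h2⟩ | ⟨h1, h2⟩ <;>
    nlinarith [s3_b.1, s3_b.2, s2_b.1, s2_b.2, s6_b.1, s6_b.2, s26_b.1, s26_b.2, s3_nn, s2_nn, s6_nn, s26_nn]

lemma nm6 : (((1:ℝ)/6, -s26/6) : ℝ × ℝ) ∉ ({((0:ℝ), (1:ℝ)), ((0:ℝ), (-1:ℝ)), ((0:ℝ), s6/3), ((0:ℝ), -s6/3)} : Set (ℝ × ℝ)) := by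
  intro h
  simp only [Set.mem_insert_iff, Set.mem_singleton_iff, Prod.mk.injEq] at h
  rcases h with ⟨h1, h2⟩ | ⟨h1, h2⟩ | ⟨h1, h2⟩ | ⟨h1, h2⟩ <;>
    nlinarith [s3_b.1, s3_b.2, s2_b.1, s2_b.2, s6_b.1, s6_b.2, s26_b.1, s26_b.2, s3_nn, s2_nn, s6_nn, s26_nn]

lemma nm7 : (((0:ℝ), (1:ℝ)) : ℝ × ℝ) ∉ ({((0:ℝ), (-1:ℝ)), ((0:ℝ), s6/3), ((0:ℝ), -s6/3)} : Set (ℝ × ℝ)) := by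
  intro h
  simp only [Set.mem_insert_iff, Set.mem_singleton_iff, Prod.mk.injEq] at h
  rcases h with ⟨h1, h2⟩ | ⟨h1, h2⟩ | ⟨h1, h2⟩ <;>
    nlinarith [s3_b.1, s3_b.2, s2_b.1, s2_b.2, s6_b.1, s6_b.2, s26_b.1, s26_b.2, s3_nn, s2_nn, s6_nn, s26_nn]

lemma nm8 : (((0:ℝ), (-1:ℝ)) : ℝ × ℝ) ∉ ({((0:ℝ), s6/3), ((0:ℝ), -s6/3)} : Set (ℝ × ℝ)) := by
  intro h
  simp only [Set.mem_insert_iff, Set.mem_singleton_iff, Prod.mk.injEq] at h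
  rcases h with ⟨h1, h2⟩ | ⟨h1, h2⟩ <;>
    nlinarith [s3_b.1, s3_b.2, s2_b.1, s2_b.2, s6_b.1, s6_b.2, s26_b.1, s26_b.2, s3_nn, s2_nn, s6_nn, s26_nn]

lemma nm_last : (((0:ℝ), s6/3) : ℝ × ℝ) ≠ ((0:ℝ), -s6/3) := by
  intro h
  rw [Prod.mk.injEq] at h
  nlinarith [s6_b.1]

lemma S10_ncard : S10.ncard = 10 := by
  unfold S10
  rw [Set.ncard_insert_of_notMem nm1, Set.ncard_insert_of_notMem nm2,
    Set.ncard_insert_of_notMem nm3, Set.ncard_insert_of_notMem nm4,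
    Set.ncard_insert_of_notMem nm5, Set.ncard_insert_of_notMem nm6,
    Set.ncard_insert_of_notMem nm7, Set.ncard_insert_of_notMem nm8,
    Set.ncard_pair nm_last]

lemma hess_ne : ∀ p ∈ S10, hessDet f8 p ≠ 0 := by
  intro p hp
  rcases hp with h|h|h|h|h|h|h|h|h|h <;> subst h
  · have e : hessDet f8 (1+s3/3, 0) = 12 + 4/3*s3 := by
      rw [hessDet_eq]; linear_combination (4 + 16/9*s3) * s3_sq
    rw [e]; nlinarith [s3_b.1, s3_b.2]
  · have e : hessDet f8 (1-s3/3, 0) = 12 - 4/3*s3 := by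
      rw [hessDet_eq]; linear_combination (4 - 16/9*s3) * s3_sq
    rw [e]; nlinarith [s3_b.1, s3_b.2]
  · have e : hessDet f8 ((1:ℝ)/2, s2/2) = -2 := by
      rw [hessDet_eq]; linear_combination (-11/2 + 15/2*s2^2 - 9/4*s2^4) * s2_sq
    rw [e]; norm_num
  · have e : hessDet f8 ((1:ℝ)/2, -s2/2) = -2 := by
      rw [hessDet_eq]; linear_combination (-11/2 + 15/2*s2^2 - 9/4*s2^4) * s2_sq
    rw [e]; norm_num
  · have e : hessDet f8 ((1:ℝ)/6, s26/6) = 26/27 := by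
      rw [hessDet_eq]; linear_combination (-13/54 + 5/54*s26^2 - 1/324*s26^4) * s26_sq
    rw [e]; norm_num
  · have e : hessDet f8 ((1:ℝ)/6, -s26/6) = 26/27 := by
      rw [hessDet_eq]; linear_combination (-13/54 + 5/54*s26^2 - 1/324*s26^4) * s26_sq
    rw [e]; norm_num
  · have e : hessDet f8 ((0:ℝ), (1:ℝ)) = -4 := by rw [hessDet_eq]; norm_num
    rw [e]; norm_num
  · have e : hessDet f8 ((0:ℝ), (-1:ℝ)) = -4 := by rw [hessDet_eq]; norm_num
    rw [e]; norm_num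
  · have e : hessDet f8 ((0:ℝ), s6/3) = -8/3 := by
      rw [hessDet_eq]; linear_combination (-4/9 + 16/9*s6^2 - 16/81*s6^4) * s6_sq
    rw [e]; norm_num
  · have e : hessDet f8 ((0:ℝ), -s6/3) = -8/3 := by
      rw [hessDet_eq]; linear_combination (-4/9 + 16/9*s6^2 - 16/81*s6^4) * s6_sq
    rw [e]; norm_num

lemma isLocMin_box (f : ℝ → ℝ → ℝ) (p : ℝ × ℝ) (δ : ℝ) (hδ : 0 < δ)
    (h : ∀ u v : ℝ, |u| < δ → |v| < δ → f p.1 p.2 ≤ f (p.1+u) (p.2+v)) : IsLocMin f p := by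
  unfold IsLocMin
  filter_upwards [Metric.ball_mem_nhds p hδ] with q hq
  rw [Metric.mem_ball, Prod.dist_eq, max_lt_iff, Real.dist_eq, Real.dist_eq] at hq
  have := h (q.1 - p.1) (q.2 - p.2) hq.1 hq.2
  simpa using this

lemma isLocMax_box (f : ℝ → ℝ → ℝ) (p : ℝ × ℝ) (δ : ℝ) (hδ : 0 < δ)
    (h : ∀ u v : ℝ, |u| < δ → |v| < δ → f (p.1+u) (p.2+v) ≤ f p.1 p.2) : IsLocMax f p := by
  unfold IsLocMax
  filter_upwards [Metric.ball_mem_nhds p hδ] with q hq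
  rw [Metric.mem_ball, Prod.dist_eq, max_lt_iff, Real.dist_eq, Real.dist_eq] at hq
  have := h (q.1 - p.1) (q.2 - p.2) hq.1 hq.2
  simpa using this

lemma not_locMin_line (f : ℝ → ℝ → ℝ) (p : ℝ × ℝ) (v w δ : ℝ) (hδ : 0 < δ)
    (h : ∀ t : ℝ, 0 < t → t < δ → f (p.1 + t*v) (p.2 + t*w) < f p.1 p.2) :
    ¬ IsLocMin f p := by
  intro hm
  have hc : Filter.Tendsto (fun t : ℝ => ((p.1 + t*v, p.2 + t*w) : ℝ × ℝ))
      (nhdsWithin 0 (Set.Ioi 0)) (nhds p) := by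
    have hcont : Filter.Tendsto (fun t : ℝ => ((p.1 + t*v, p.2 + t*w) : ℝ × ℝ))
        (nhds 0) (nhds (p.1 + 0*v, p.2 + 0*w)) := by
      apply Continuous.tendsto; continuity
    have h0 : ((p.1 + 0*v, p.2 + 0*w) : ℝ × ℝ) = p := by simp
    rw [h0] at hcont
    exact hcont.mono_left nhdsWithin_le_nhds
  have h1 : ∀ᶠ t in nhdsWithin (0:ℝ) (Set.Ioi 0),
      f p.1 p.2 ≤ f (p.1+t*v) (p.2+t*w) := hc.eventually hm
  have h2 : ∀ᶠ t in nhdsWithin (0:ℝ) (Set.Ioi 0), t ∈ Set.Ioo (0:ℝ) δ :=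
    Ioo_mem_nhdsGT_of_mem ⟨le_refl 0, hδ⟩
  obtain ⟨t, ht1, ht2⟩ := (h1.and h2).exists
  exact absurd ht1 (not_le.2 (h t ht2.1 ht2.2))

lemma not_locMax_line (f : ℝ → ℝ → ℝ) (p : ℝ × ℝ) (v w δ : ℝ) (hδ : 0 < δ)
    (h : ∀ t : ℝ, 0 < t → t < δ → f p.1 p.2 < f (p.1 + t*v) (p.2 + t*w)) :
    ¬ IsLocMax f p := by
  intro hm
  have hc : Filter.Tendsto (fun t : ℝ => ((p.1 + t*v, p.2 + t*w) : ℝ × ℝ))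
      (nhdsWithin 0 (Set.Ioi 0)) (nhds p) := by
    have hcont : Filter.Tendsto (fun t : ℝ => ((p.1 + t*v, p.2 + t*w) : ℝ × ℝ))
        (nhds 0) (nhds (p.1 + 0*v, p.2 + 0*w)) := by
      apply Continuous.tendsto; continuity
    have h0 : ((p.1 + 0*v, p.2 + 0*w) : ℝ × ℝ) = p := by simp
    rw [h0] at hcont
    exact hcont.mono_left nhdsWithin_le_nhds
  have h1 : ∀ᶠ t in nhdsWithin (0:ℝ) (Set.Ioi 0),
      f (p.1+t*v) (p.2+t*w) ≤ f p.1 p.2 := hc.eventually hm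
  have h2 : ∀ᶠ t in nhdsWithin (0:ℝ) (Set.Ioi 0), t ∈ Set.Ioo (0:ℝ) δ :=
    Ioo_mem_nhdsGT_of_mem ⟨le_refl 0, hδ⟩
  obtain ⟨t, ht1, ht2⟩ := (h1.and h2).exists
  exact absurd ht1 (not_le.2 (h t ht2.1 ht2.2))

lemma nmin_P1 : ¬ IsLocMin f8 ((0:ℝ), (1:ℝ)) := by
  apply not_locMin_line f8 _ 1 (-1) (1/10) (by norm_num)
  intro t ht1 ht2
  show f8 ((0:ℝ) + t*1) (1 + t*(-1)) < f8 0 1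
  have e : f8 ((0:ℝ) + t*1) (1 + t*(-1)) - f8 0 1 = t^2*((t-1)*(3*t^2-5*t+1)) := by
    simp only [f8]; ring
  have h2 : (t-1)*(3*t^2-5*t+1) < 0 := by nlinarith
  nlinarith [e, mul_neg_of_pos_of_neg (pow_pos ht1 2) h2]

lemma nmax_P1 : ¬ IsLocMax f8 ((0:ℝ), (1:ℝ)) := by
  apply not_locMax_line f8 _ 1 0 (1/10) (by norm_num)
  intro t ht1 ht2
  show f8 0 1 < f8 ((0:ℝ) + t*1) (1 + t*0)
  have e : f8 ((0:ℝ) + t*1) (1 + t*0) - f8 0 1 = t^2*(t+1) := by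
    simp only [f8]; ring
  have h2 : (0:ℝ) < t+1 := by linarith
  nlinarith [e, mul_pos (pow_pos ht1 2) h2]

lemma nmin_P2 : ¬ IsLocMin f8 ((0:ℝ), (-1:ℝ)) := by
  apply not_locMin_line f8 _ 1 1 (1/10) (by norm_num)
  intro t ht1 ht2
  show f8 ((0:ℝ) + t*1) (-1 + t*1) < f8 0 (-1)
  have e : f8 ((0:ℝ) + t*1) (-1 + t*1) - f8 0 (-1) = t^2*((t-1)*(3*t^2-5*t+1)) := by
    simp only [f8]; ring
  have h2 : (t-1)*(3*t^2-5*t+1) < 0 := by nlinarith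
  nlinarith [e, mul_neg_of_pos_of_neg (pow_pos ht1 2) h2]

lemma nmax_P2 : ¬ IsLocMax f8 ((0:ℝ), (-1:ℝ)) := by
  apply not_locMax_line f8 _ 1 0 (1/10) (by norm_num)
  intro t ht1 ht2
  show f8 0 (-1) < f8 ((0:ℝ) + t*1) (-1 + t*0)
  have e : f8 ((0:ℝ) + t*1) (-1 + t*0) - f8 0 (-1) = t^2*(t+1) := by
    simp only [f8]; ring
  have h2 : (0:ℝ) < t+1 := by linarith
  nlinarith [e, mul_pos (pow_pos ht1 2) h2]

lemma nmin_P3 : ¬ IsLocMin f8 ((0:ℝ), s6/3) := by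
  apply not_locMin_line f8 _ 1 0 (1/10) (by norm_num)
  intro t ht1 ht2
  show f8 ((0:ℝ) + t*1) (s6/3 + t*0) < f8 0 (s6/3)
  have e : f8 ((0:ℝ) + t*1) (s6/3 + t*0) - f8 0 (s6/3) = t^2*(t-1/3) := by
    simp only [f8]
    linear_combination ((-1/3)*t + (1/27)*t*s6^2 + (4/9)*t^2) * s6_sq
  have h2 : t-1/3 < 0 := by linarith
  nlinarith [e, mul_neg_of_pos_of_neg (pow_pos ht1 2) h2]

lemma nmax_P3 : ¬ IsLocMax f8 ((0:ℝ), s6/3) := by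
  apply not_locMax_line f8 _ 1 (-1) (1/10) (by norm_num)
  intro t ht1 ht2
  show f8 0 (s6/3) < f8 ((0:ℝ) + t*1) (s6/3 + t*(-1))
  have e : f8 ((0:ℝ) + t*1) (s6/3 + t*(-1)) - f8 0 (s6/3) =
      t^2*((1-2*s6+3*t)*(t^2+(1-2/3*s6)*t-1/3)) := by
    simp only [f8]
    linear_combination ((-1/3)*t + (1/27)*t*s6^2 + (4/9)*t^2 + (-4/9)*t^2*s6 + (2/3)*t^3) * s6_sq
  have f1 : 1-2*s6+3*t < 0 := by nlinarith [s6_b.1]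
  have f2 : t^2+(1-2/3*s6)*t-1/3 < 0 := by nlinarith [s6_b.1, s6_b.2]
  nlinarith [e, mul_pos (pow_pos ht1 2) (mul_pos_of_neg_of_neg f1 f2)]

lemma nmin_P4 : ¬ IsLocMin f8 ((0:ℝ), -s6/3) := by
  apply not_locMin_line f8 _ 1 0 (1/10) (by norm_num)
  intro t ht1 ht2
  show f8 ((0:ℝ) + t*1) (-s6/3 + t*0) < f8 0 (-s6/3)
  have e : f8 ((0:ℝ) + t*1) (-s6/3 + t*0) - f8 0 (-s6/3) = t^2*(t-1/3) := by
    simp only [f8]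
    linear_combination ((-1/3)*t + (1/27)*t*s6^2 + (4/9)*t^2) * s6_sq
  have h2 : t-1/3 < 0 := by linarith
  nlinarith [e, mul_neg_of_pos_of_neg (pow_pos ht1 2) h2]

lemma nmax_P4 : ¬ IsLocMax f8 ((0:ℝ), -s6/3) := by
  apply not_locMax_line f8 _ 1 1 (1/10) (by norm_num)
  intro t ht1 ht2
  show f8 0 (-s6/3) < f8 ((0:ℝ) + t*1) (-s6/3 + t*1)
  have e : f8 ((0:ℝ) + t*1) (-s6/3 + t*1) - f8 0 (-s6/3) =
      t^2*((1-2*s6+3*t)*(t^2+(1-2/3*s6)*t-1/3)) := by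
    simp only [f8]
    linear_combination ((-1/3)*t + (1/27)*t*s6^2 + (4/9)*t^2 + (-4/9)*t^2*s6 + (2/3)*t^3) * s6_sq
  have f1 : 1-2*s6+3*t < 0 := by nlinarith [s6_b.1]
  have f2 : t^2+(1-2/3*s6)*t-1/3 < 0 := by nlinarith [s6_b.1, s6_b.2]
  nlinarith [e, mul_pos (pow_pos ht1 2) (mul_pos_of_neg_of_neg f1 f2)]

lemma nmin_P7 : ¬ IsLocMin f8 ((1:ℝ)/2, s2/2) := by
  apply not_locMin_line f8 _ 1 (-1/2) (1/10) (by norm_num)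
  intro t ht1 ht2
  show f8 ((1:ℝ)/2 + t*1) (s2/2 + t*(-1/2)) < f8 (1/2) (s2/2)
  have e : f8 ((1:ℝ)/2 + t*1) (s2/2 + t*(-1/2)) - f8 (1/2) (s2/2) =
      t^2*((1/2+t)*((1-3*s2/2+3*t/4)*(1-s2/2+t/4))) := by
    simp only [f8]
    linear_combination ((1/8)*t + (-3/8)*t*s2 + (3/16)*t*s2^2 + (19/16)*t^2 + (-3/4)*t^2*s2 + (3/8)*t^3) * s2_sq
  have f0 : (0:ℝ) < 1/2+t := by linarith
  have f1 : 1-3*s2/2+3*t/4 < 0 := by nlinarith [s2_b.1]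
  have f2 : (0:ℝ) < 1-s2/2+t/4 := by nlinarith [s2_b.2]
  nlinarith [e, mul_pos (pow_pos ht1 2) (mul_pos f0 (mul_pos_of_neg_of_neg f1 (by linarith : -(1-s2/2+t/4) < 0)))]

lemma nmax_P7 : ¬ IsLocMax f8 ((1:ℝ)/2, s2/2) := by
  apply not_locMax_line f8 _ 1 0 (1/10) (by norm_num)
  intro t ht1 ht2
  show f8 (1/2) (s2/2) < f8 ((1:ℝ)/2 + t*1) (s2/2 + t*0)
  have e : f8 ((1:ℝ)/2 + t*1) (s2/2 + t*0) - f8 (1/2) (s2/2) = t^2*(1/2+t) := by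
    simp only [f8]
    linear_combination ((1/8)*t + (3/16)*t*s2^2 + t^2) * s2_sq
  have h2 : (0:ℝ) < 1/2+t := by linarith
  nlinarith [e, mul_pos (pow_pos ht1 2) h2]

lemma nmin_P8 : ¬ IsLocMin f8 ((1:ℝ)/2, -s2/2) := by
  apply not_locMin_line f8 _ 1 (1/2) (1/10) (by norm_num)
  intro t ht1 ht2
  show f8 ((1:ℝ)/2 + t*1) (-s2/2 + t*(1/2)) < f8 (1/2) (-s2/2)
  have e : f8 ((1:ℝ)/2 + t*1) (-s2/2 + t*(1/2)) - f8 (1/2) (-s2/2) =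
      t^2*((1/2+t)*((1-3*s2/2+3*t/4)*(1-s2/2+t/4))) := by
    simp only [f8]
    linear_combination ((1/8)*t + (-3/8)*t*s2 + (3/16)*t*s2^2 + (19/16)*t^2 + (-3/4)*t^2*s2 + (3/8)*t^3) * s2_sq
  have f0 : (0:ℝ) < 1/2+t := by linarith
  have f1 : 1-3*s2/2+3*t/4 < 0 := by nlinarith [s2_b.1]
  have f2 : (0:ℝ) < 1-s2/2+t/4 := by nlinarith [s2_b.2]
  nlinarith [e, mul_pos (pow_pos ht1 2) (mul_pos f0 (mul_pos_of_neg_of_neg f1 (by linarith : -(1-s2/2+t/4) < 0)))]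

lemma nmax_P8 : ¬ IsLocMax f8 ((1:ℝ)/2, -s2/2) := by
  apply not_locMax_line f8 _ 1 0 (1/10) (by norm_num)
  intro t ht1 ht2
  show f8 (1/2) (-s2/2) < f8 ((1:ℝ)/2 + t*1) (-s2/2 + t*0)
  have e : f8 ((1:ℝ)/2 + t*1) (-s2/2 + t*0) - f8 (1/2) (-s2/2) = t^2*(1/2+t) := by
    simp only [f8]
    linear_combination ((1/8)*t + (3/16)*t*s2^2 + t^2) * s2_sq
  have h2 : (0:ℝ) < 1/2+t := by linarith
  nlinarith [e, mul_pos (pow_pos ht1 2) h2]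

lemma nmax_P5 : ¬ IsLocMax f8 (1+s3/3, 0) := by
  apply not_locMax_line f8 _ 1 0 (1/10) (by norm_num)
  intro t ht1 ht2
  show f8 (1+s3/3) 0 < f8 ((1+s3/3) + t*1) (0 + t*0)
  have e : f8 ((1+s3/3) + t*1) (0 + t*0) - f8 (1+s3/3) 0 = t^2*(t+s3) := by
    simp only [f8]
    linear_combination ((1/3)*t) * s3_sq
  have h2 : (0:ℝ) < t+s3 := by nlinarith [s3_b.1]
  nlinarith [e, mul_pos (pow_pos ht1 2) h2]

lemma nmin_P6 : ¬ IsLocMin f8 (1-s3/3, 0) := by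
  apply not_locMin_line f8 _ 1 0 (1/10) (by norm_num)
  intro t ht1 ht2
  show f8 ((1-s3/3) + t*1) (0 + t*0) < f8 (1-s3/3) 0
  have e : f8 ((1-s3/3) + t*1) (0 + t*0) - f8 (1-s3/3) 0 = t^2*(t-s3) := by
    simp only [f8]
    linear_combination ((1/3)*t) * s3_sq
  have h2 : t-s3 < 0 := by nlinarith [s3_b.1]
  nlinarith [e, mul_neg_of_pos_of_neg (pow_pos ht1 2) h2]

lemma nmax_P9 : ¬ IsLocMax f8 ((1:ℝ)/6, s26/6) := by
  apply not_locMax_line f8 _ 1 0 (1/10) (by norm_num)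
  intro t ht1 ht2
  show f8 ((1:ℝ)/6) (s26/6) < f8 ((1:ℝ)/6 + t*1) (s26/6 + t*0)
  have e : f8 ((1:ℝ)/6 + t*1) (s26/6 + t*0) - f8 ((1:ℝ)/6) (s26/6) = t^2*(t+7/18) := by
    simp only [f8]
    linear_combination ((-1/24)*t + (1/432)*t*s26^2 + (1/9)*t^2) * s26_sq
  have h2 : (0:ℝ) < t+7/18 := by linarith
  nlinarith [e, mul_pos (pow_pos ht1 2) h2]

lemma nmax_P10 : ¬ IsLocMax f8 ((1:ℝ)/6, -s26/6) := by
  apply not_locMax_line f8 _ 1 0 (1/10) (by norm_num)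
  intro t ht1 ht2
  show f8 ((1:ℝ)/6) (-s26/6) < f8 ((1:ℝ)/6 + t*1) (-s26/6 + t*0)
  have e : f8 ((1:ℝ)/6 + t*1) (-s26/6 + t*0) - f8 ((1:ℝ)/6) (-s26/6) = t^2*(t+7/18) := by
    simp only [f8]
    linear_combination ((-1/24)*t + (1/432)*t*s26^2 + (1/9)*t^2) * s26_sq
  have h2 : (0:ℝ) < t+7/18 := by linarith
  nlinarith [e, mul_pos (pow_pos ht1 2) h2]

lemma box5 (a u v : ℝ) (ha : 3*a^2-6*a+2 = 0) (ha1 : 1.57 < a) (ha2 : a < 1.58)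
    (hu1 : -(1/10) < u) (hu2 : u < 1/10) (hv1 : -(1/10) < v) (hv2 : v < 1/10) :
    f8 a 0 ≤ f8 (a+u) (0+v) := by
  simp only [f8]
  have e1 : 0 ≤ u^2*(u+3*a-3) := mul_nonneg (sq_nonneg u) (by linarith)
  have e2 : 0 ≤ v^2*((a+u)*(4*(a+u)-5)) := mul_nonneg (sq_nonneg v) (by nlinarith)
  have e3 : 0 ≤ 3*v^4*(a+u) := by
    have : (0:ℝ) ≤ v^4 := by positivity
    nlinarith
  nlinarith [e1, e2, e3, ha]

lemma box6 (a u v : ℝ) (ha : 3*a^2-6*a+2 = 0) (ha1 : 0.42 < a) (ha2 : a < 0.43)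
    (hu1 : -(1/10) < u) (hu2 : u < 1/10) (hv1 : -(1/10) < v) (hv2 : v < 1/10) :
    f8 (a+u) (0+v) ≤ f8 a 0 := by
  simp only [f8]
  have e1 : u^2*(u+3*a-3) ≤ 0 := mul_nonpos_of_nonneg_of_nonpos (sq_nonneg u) (by linarith)
  have e2 : v^2*((a+u)*(4*(a+u)-5+3*v^2)) ≤ 0 :=
    mul_nonpos_of_nonneg_of_nonpos (sq_nonneg v) (by nlinarith)
  nlinarith [e1, e2, ha]

lemma box9 (b u v : ℝ) (hb : b^2 = 13/18)
    (hu1 : -(1/100) < u) (hu2 : u < 1/100) (hv1 : -(1/100) < v) (hv2 : v < 1/100) :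
    f8 (1/6) b ≤ f8 (1/6+u) (b+v) := by
  simp only [f8]
  have hb1 : -(0.86) < b := by nlinarith
  have hb2 : b < 0.86 := by nlinarith
  have hbv1 : -(0.0086) ≤ b*v := by nlinarith
  have hbv2 : b*v ≤ 0.0086 := by nlinarith
  have hubv : -(0.000086) ≤ u*(b*v) := by nlinarith
  have e1 : 0 ≤ u^2*(u+1/100) := mul_nonneg (sq_nonneg u) (by linarith)
  have e2 : 0 ≤ v^2*(2*(b*v)+0.0172) := mul_nonneg (sq_nonneg v) (by linarith)
  have e3 : 0 ≤ v^2*((28/3)*u + 28/300) := mul_nonneg (sq_nonneg v) (by linarith)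
  have e4 : 0 ≤ (v^2)^2*(1/2+3*u) := mul_nonneg (sq_nonneg _) (by linarith)
  have e5 : 0 ≤ u^2*(8*(b*v)+0.0688) := mul_nonneg (sq_nonneg u) (by linarith)
  have e6 : 0 ≤ v^2*(12*(u*(b*v)) + 0.001032) := mul_nonneg (sq_nonneg v) (by linarith)
  have e7 : 0 ≤ 4*u^2*v^2 := by positivity
  have hbvv : b^2*v^2 = 13/18*v^2 := by rw [hb]
  have hsq : 0 ≤ (u + 2.16*(b*v))^2 := sq_nonneg _
  have key : ((1/6)+u)*(((1/6)+u)+3*(b+v)^2-2)*(((1/6)+u)+(b+v)^2-1) -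
      (1/6)*((1/6)+3*b^2-2)*((1/6)+b^2-1) =
      (7/18)*u^2 + (4/3)*(u*(b*v)) + (13/9)*v^2 + u^3 + 2*(b*v)*v^2 + (1/2)*(v^2)^2
        + (28/3)*(u*v^2) + 12*(u*(b*v))*v^2 + 3*u*(v^2)^2 + 8*u^2*(b*v) + 4*u^2*v^2 := by
    linear_combination (2*v*b + 3*v^2 - 3/2*u + 3*u*b^2 + 12*u*v*b + 18*u*v^2 + 4*u^2) * hb
  linarith [e1, e2, e3, e4, e5, e6, e7, hsq, hbvv, key, sq_nonneg u, sq_nonneg v]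

lemma min_P5 : IsLocMin f8 (1+s3/3, 0) := by
  apply isLocMin_box f8 _ (1/10) (by norm_num)
  intro u v hu hv
  rw [abs_lt] at hu hv
  exact box5 (1+s3/3) u v (by linear_combination s3_sq/3)
    (by nlinarith [s3_b.1]) (by nlinarith [s3_b.2]) hu.1 hu.2 hv.1 hv.2

lemma max_P6 : IsLocMax f8 (1-s3/3, 0) := by
  apply isLocMax_box f8 _ (1/10) (by norm_num)
  intro u v hu hv
  rw [abs_lt] at hu hv
  exact box6 (1-s3/3) u v (by linear_combination s3_sq/3)
    (by nlinarith [s3_b.2]) (by nlinarith [s3_b.1]) hu.1 hu.2 hv.1 hv.2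

lemma min_P9 : IsLocMin f8 ((1:ℝ)/6, s26/6) := by
  apply isLocMin_box f8 _ (1/100) (by norm_num)
  intro u v hu hv
  rw [abs_lt] at hu hv
  exact box9 (s26/6) u v (by linear_combination s26_sq/36) hu.1 hu.2 hv.1 hv.2

lemma min_P10 : IsLocMin f8 ((1:ℝ)/6, -s26/6) := by
  apply isLocMin_box f8 _ (1/100) (by norm_num)
  intro u v hu hv
  rw [abs_lt] at hu hv
  exact box9 (-s26/6) u v (by linear_combination s26_sq/36) hu.1 hu.2 hv.1 hv.2

lemma mP5 : ((1+s3/3, 0) : ℝ × ℝ) ∈ S10 := Set.mem_insert _ _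
lemma mP6 : ((1-s3/3, 0) : ℝ × ℝ) ∈ S10 := Set.mem_insert_of_mem _ (Set.mem_insert _ _)
lemma mP7 : (((1:ℝ)/2, s2/2) : ℝ × ℝ) ∈ S10 := Set.mem_insert_of_mem _ (Set.mem_insert_of_mem _ (Set.mem_insert _ _))
lemma mP8 : (((1:ℝ)/2, -s2/2) : ℝ × ℝ) ∈ S10 := Set.mem_insert_of_mem _ (Set.mem_insert_of_mem _ (Set.mem_insert_of_mem _ (Set.mem_insert _ _)))
lemma mP9 : (((1:ℝ)/6, s26/6) : ℝ × ℝ) ∈ S10 := Set.mem_insert_of_mem _ (Set.mem_insert_of_mem _ (Set.mem_insert_of_mem _ (Set.mem_insert_of_mem _ (Set.mem_insert _ _))))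
lemma mP10 : (((1:ℝ)/6, -s26/6) : ℝ × ℝ) ∈ S10 := Set.mem_insert_of_mem _ (Set.mem_insert_of_mem _ (Set.mem_insert_of_mem _ (Set.mem_insert_of_mem _ (Set.mem_insert_of_mem _ (Set.mem_insert _ _)))))
lemma mP1 : (((0:ℝ), (1:ℝ)) : ℝ × ℝ) ∈ S10 := Set.mem_insert_of_mem _ (Set.mem_insert_of_mem _ (Set.mem_insert_of_mem _ (Set.mem_insert_of_mem _ (Set.mem_insert_of_mem _ (Set.mem_insert_of_mem _ (Set.mem_insert _ _))))))
lemma mP2 : (((0:ℝ), (-1:ℝ)) : ℝ × ℝ) ∈ S10 := Set.mem_insert_of_mem _ (Set.mem_insert_of_mem _ (Set.mem_insert_of_mem _ (Set.mem_insert_of_mem _ (Set.mem_insert_of_mem _ (Set.mem_insert_of_mem _ (Set.mem_insert_of_mem _ (Set.mem_insert _ _)))))))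
lemma mP3 : (((0:ℝ), s6/3) : ℝ × ℝ) ∈ S10 := Set.mem_insert_of_mem _ (Set.mem_insert_of_mem _ (Set.mem_insert_of_mem _ (Set.mem_insert_of_mem _ (Set.mem_insert_of_mem _ (Set.mem_insert_of_mem _ (Set.mem_insert_of_mem _ (Set.mem_insert_of_mem _ (Set.mem_insert _ _))))))))
lemma mP4 : (((0:ℝ), -s6/3) : ℝ × ℝ) ∈ S10 := Set.mem_insert_of_mem _ (Set.mem_insert_of_mem _ (Set.mem_insert_of_mem _ (Set.mem_insert_of_mem _ (Set.mem_insert_of_mem _ (Set.mem_insert_of_mem _ (Set.mem_insert_of_mem _ (Set.mem_insert_of_mem _ (Set.mem_insert_of_mem _ rfl))))))))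

lemma critS10 : ∀ p ∈ S10, IsCriticalPt f8 p := by
  intro p hp; rw [← critset] at hp; exact hp

lemma minset : {p : ℝ × ℝ | IsCriticalPt f8 p ∧ IsLocMin f8 p} =
    ({(1+s3/3, 0), ((1:ℝ)/6, s26/6), ((1:ℝ)/6, -s26/6)} : Set (ℝ × ℝ)) := by
  ext p
  simp only [Set.mem_setOf_eq, Set.mem_insert_iff, Set.mem_singleton_iff]
  constructor
  · rintro ⟨hc, hm⟩
    have hp : p ∈ S10 := by rw [← critset]; exact hc
    rcases hp with h|h|h|h|h|h|h|h|h|h <;> subst h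
    · exact Or.inl rfl
    · exact absurd hm nmin_P6
    · exact absurd hm nmin_P7
    · exact absurd hm nmin_P8
    · exact Or.inr (Or.inl rfl)
    · exact Or.inr (Or.inr rfl)
    · exact absurd hm nmin_P1
    · exact absurd hm nmin_P2
    · exact absurd hm nmin_P3
    · exact absurd hm nmin_P4
  · rintro (h|h|h) <;> subst h
    · exact ⟨critS10 _ mP5, min_P5⟩
    · exact ⟨critS10 _ mP9, min_P9⟩
    · exact ⟨critS10 _ mP10, min_P10⟩

lemma maxset : {p : ℝ × ℝ | IsCriticalPt f8 p ∧ IsLocMax f8 p} =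
    ({(1-s3/3, 0)} : Set (ℝ × ℝ)) := by
  ext p
  simp only [Set.mem_setOf_eq, Set.mem_singleton_iff]
  constructor
  · rintro ⟨hc, hm⟩
    have hp : p ∈ S10 := by rw [← critset]; exact hc
    rcases hp with h|h|h|h|h|h|h|h|h|h <;> subst h
    · exact absurd hm nmax_P5
    · rfl
    · exact absurd hm nmax_P7
    · exact absurd hm nmax_P8
    · exact absurd hm nmax_P9
    · exact absurd hm nmax_P10
    · exact absurd hm nmax_P1
    · exact absurd hm nmax_P2
    · exact absurd hm nmax_P3
    · exact absurd hm nmax_P4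
  · rintro h; subst h
    exact ⟨critS10 _ mP6, max_P6⟩

lemma sadset : {p : ℝ × ℝ | IsSaddle f8 p} =
    ({((1:ℝ)/2, s2/2), ((1:ℝ)/2, -s2/2), ((0:ℝ), (1:ℝ)), ((0:ℝ), (-1:ℝ)),
      ((0:ℝ), s6/3), ((0:ℝ), -s6/3)} : Set (ℝ × ℝ)) := by
  ext p
  simp only [Set.mem_setOf_eq, IsSaddle, Set.mem_insert_iff, Set.mem_singleton_iff]
  constructor
  · rintro ⟨hc, hm, hM⟩
    have hp : p ∈ S10 := by rw [← critset]; exact hc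
    rcases hp with h|h|h|h|h|h|h|h|h|h <;> subst h
    · exact absurd min_P5 hm
    · exact absurd max_P6 hM
    · exact Or.inl rfl
    · exact Or.inr (Or.inl rfl)
    · exact absurd min_P9 hm
    · exact absurd min_P10 hm
    · exact Or.inr (Or.inr (Or.inl rfl))
    · exact Or.inr (Or.inr (Or.inr (Or.inl rfl)))
    · exact Or.inr (Or.inr (Or.inr (Or.inr (Or.inl rfl))))
    · exact Or.inr (Or.inr (Or.inr (Or.inr (Or.inr rfl))))
  · rintro (h|h|h|h|h|h) <;> subst h
    · exact ⟨critS10 _ mP7, nmin_P7, nmax_P7⟩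
    · exact ⟨critS10 _ mP8, nmin_P8, nmax_P8⟩
    · exact ⟨critS10 _ mP1, nmin_P1, nmax_P1⟩
    · exact ⟨critS10 _ mP2, nmin_P2, nmax_P2⟩
    · exact ⟨critS10 _ mP3, nmin_P3, nmax_P3⟩
    · exact ⟨critS10 _ mP4, nmin_P4, nmax_P4⟩

lemma minpts_ncard :
    ({(1+s3/3, 0), ((1:ℝ)/6, s26/6), ((1:ℝ)/6, -s26/6)} : Set (ℝ × ℝ)).ncard = 3 := by
  have h1 : ((1+s3/3, 0) : ℝ × ℝ) ∉
      ({((1:ℝ)/6, s26/6), ((1:ℝ)/6, -s26/6)} : Set (ℝ × ℝ)) := by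
    intro h
    simp only [Set.mem_insert_iff, Set.mem_singleton_iff, Prod.mk.injEq] at h
    rcases h with ⟨h1, h2⟩ | ⟨h1, h2⟩ <;> nlinarith [s3_b.1, s3_b.2]
  have h2 : (((1:ℝ)/6, s26/6) : ℝ × ℝ) ≠ ((1:ℝ)/6, -s26/6) := by
    intro h
    rw [Prod.mk.injEq] at h
    nlinarith [s26_b.1]
  rw [Set.ncard_insert_of_notMem h1, Set.ncard_pair h2]

lemma sadpts_ncard :
    ({((1:ℝ)/2, s2/2), ((1:ℝ)/2, -s2/2), ((0:ℝ), (1:ℝ)), ((0:ℝ), (-1:ℝ)),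
      ((0:ℝ), s6/3), ((0:ℝ), -s6/3)} : Set (ℝ × ℝ)).ncard = 6 := by
  have h1 : (((1:ℝ)/2, s2/2) : ℝ × ℝ) ∉
      ({((1:ℝ)/2, -s2/2), ((0:ℝ), (1:ℝ)), ((0:ℝ), (-1:ℝ)), ((0:ℝ), s6/3), ((0:ℝ), -s6/3)} : Set (ℝ × ℝ)) := by
    intro h
    simp only [Set.mem_insert_iff, Set.mem_singleton_iff, Prod.mk.injEq] at h
    rcases h with ⟨g1, g2⟩|⟨g1, g2⟩|⟨g1, g2⟩|⟨g1, g2⟩|⟨g1, g2⟩ <;>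
      nlinarith [s2_b.1, s2_b.2, s6_b.1, s6_b.2]
  have h2 : (((1:ℝ)/2, -s2/2) : ℝ × ℝ) ∉
      ({((0:ℝ), (1:ℝ)), ((0:ℝ), (-1:ℝ)), ((0:ℝ), s6/3), ((0:ℝ), -s6/3)} : Set (ℝ × ℝ)) := by
    intro h
    simp only [Set.mem_insert_iff, Set.mem_singleton_iff, Prod.mk.injEq] at h
    rcases h with ⟨g1, g2⟩|⟨g1, g2⟩|⟨g1, g2⟩|⟨g1, g2⟩ <;>
      nlinarith [s2_b.1, s2_b.2, s6_b.1, s6_b.2]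
  have h3 : (((0:ℝ), (1:ℝ)) : ℝ × ℝ) ∉
      ({((0:ℝ), (-1:ℝ)), ((0:ℝ), s6/3), ((0:ℝ), -s6/3)} : Set (ℝ × ℝ)) := by
    intro h
    simp only [Set.mem_insert_iff, Set.mem_singleton_iff, Prod.mk.injEq] at h
    rcases h with ⟨g1, g2⟩|⟨g1, g2⟩|⟨g1, g2⟩ <;>
      nlinarith [s6_b.1, s6_b.2]
  have h4 : (((0:ℝ), (-1:ℝ)) : ℝ × ℝ) ∉
      ({((0:ℝ), s6/3), ((0:ℝ), -s6/3)} : Set (ℝ × ℝ)) := by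
    intro h
    simp only [Set.mem_insert_iff, Set.mem_singleton_iff, Prod.mk.injEq] at h
    rcases h with ⟨g1, g2⟩|⟨g1, g2⟩ <;> nlinarith [s6_b.1, s6_b.2]
  have h5 : (((0:ℝ), s6/3) : ℝ × ℝ) ≠ ((0:ℝ), -s6/3) := by
    intro h
    rw [Prod.mk.injEq] at h
    nlinarith [s6_b.1]
  rw [Set.ncard_insert_of_notMem h1, Set.ncard_insert_of_notMem h2,
    Set.ncard_insert_of_notMem h3, Set.ncard_insert_of_notMem h4, Set.ncard_pair h5]

/-- The polynomial `f8` has only nondegenerate critical points; it has exactly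
10 critical points, of which exactly 3 are local minima, exactly 6 are
saddles, and exactly 1 are local maxima. -/
theorem morse_data_f8 :
    (∀ p : ℝ × ℝ, IsCriticalPt f8 p → hessDet f8 p ≠ 0) ∧
    {p : ℝ × ℝ | IsCriticalPt f8 p}.Finite ∧
    {p : ℝ × ℝ | IsCriticalPt f8 p}.ncard = 10 ∧
    {p : ℝ × ℝ | IsCriticalPt f8 p ∧ IsLocMin f8 p}.ncard = 3 ∧
    {p : ℝ × ℝ | IsSaddle f8 p}.ncard = 6 ∧
    {p : ℝ × ℝ | IsCriticalPt f8 p ∧ IsLocMax f8 p}.ncard = 1 := by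
  refine ⟨?_, ?_, ?_, ?_, ?_, ?_⟩
  · intro p hp
    apply hess_ne
    rw [← critset]
    exact hp
  · rw [critset]
    unfold S10
    apply Set.toFinite
  · rw [critset]
    exact S10_ncard
  · rw [minset]
    exact minpts_ncard
  · rw [sadset]
    exact sadpts_ncard
  · rw [maxset]
    exact Set.ncard_singleton _
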